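/- arXiv:2509.25081 — 4 statements merged into one kernel-verified Lean document; each statement's English description precedes it below -/
import Mathlib

section
/- Let χ : [0, π/2] → [0,1] be smooth and decreasing, t ∈ (0,1], and define φ(r) := ∫_0^r [t·cos(x) + (1−t)·χ(x)·cos(x)] dx. Then for all r ∈ (0, π/2): (a) φ(r) ≥ tan(r)·φ'(r), and (b) −φ''(r) ≥ tan(r)·φ'(r). -/
/-- Let `χ : [0,π/2] → [0,1]` be smooth and decreasing, `t ∈ (0,1]`, and
`φ(r) = ∫_0^r (t cos x + (1−t) χ(x) cos x) dx`. Then for all `r ∈ (0,π/2)`: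
(a) `φ(r) ≥ tan(r)·φ'(r)`, and (b) `−φ''(r) ≥ tan(r)·φ'(r)`. -/
theorem stmt6 (χ : ℝ → ℝ) (hχ : ContDiff ℝ (⊤ : ℕ∞) χ)
    (hχmem : ∀ x ∈ Set.Icc (0 : ℝ) (Real.pi / 2), χ x ∈ Set.Icc (0 : ℝ) 1)
    (hχdec : AntitoneOn χ (Set.Icc 0 (Real.pi / 2)))
    (t : ℝ) (ht : t ∈ Set.Ioc (0 : ℝ) 1) (φ : ℝ → ℝ)
    (hφ : ∀ r, φ r = ∫ x in (0 : ℝ)..r, t * Real.cos x + (1 - t) * χ x * Real.cos x) :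
    ∀ r ∈ Set.Ioo (0 : ℝ) (Real.pi / 2),
      Real.tan r * deriv φ r ≤ φ r ∧
      Real.tan r * deriv φ r ≤ -(deriv (deriv φ) r) := by
  have hχc : Continuous χ := hχ.continuous
  have hχd : Differentiable ℝ χ := hχ.differentiable (by simp)
  set f : ℝ → ℝ := fun x => t * Real.cos x + (1 - t) * χ x * Real.cos x with hf
  have hfc : Continuous f := by fun_prop
  have hφeq : φ = fun r => ∫ x in (0:ℝ)..r, f x := funext hφ
  have hderiv : deriv φ = f := by
    funext r
    rw [hφeq]
    exact Continuous.deriv_integral f hfc 0 r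
  intro r hr
  obtain ⟨hr0, hrπ⟩ := hr
  have hrIcc : r ∈ Set.Icc (0:ℝ) (Real.pi/2) := ⟨hr0.le, hrπ.le⟩
  have hcosr : 0 < Real.cos r := Real.cos_pos_of_mem_Ioo
    ⟨by linarith [Real.pi_pos], hrπ⟩
  have htan : Real.tan r = Real.sin r / Real.cos r := Real.tan_eq_sin_div_cos r
  have hkey : Real.tan r * deriv φ r = Real.sin r * (t + (1 - t) * χ r) := by
    rw [hderiv, htan]
    field_simp
    ring
  have h1t : 0 ≤ 1 - t := by linarith [ht.2]
  constructor
  · -- part (a)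
    rw [hkey, hφ]
    have hle : ∀ x ∈ Set.Icc (0:ℝ) r,
        (t + (1 - t) * χ r) * Real.cos x ≤ f x := by
      intro x hx
      have hxIcc : x ∈ Set.Icc (0:ℝ) (Real.pi/2) := ⟨hx.1, hx.2.trans hrπ.le⟩
      have hcos : 0 ≤ Real.cos x := Real.cos_nonneg_of_mem_Icc
        ⟨by linarith [hxIcc.1, Real.pi_pos], hxIcc.2⟩
      have hχle : χ r ≤ χ x := hχdec hxIcc hrIcc hx.2
      have : (1 - t) * χ r * Real.cos x ≤ (1 - t) * χ x * Real.cos x := by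
        apply mul_le_mul_of_nonneg_right _ hcos
        exact mul_le_mul_of_nonneg_left hχle h1t
      simp only [hf]; nlinarith
    have hint : (∫ x in (0:ℝ)..r, (t + (1 - t) * χ r) * Real.cos x)
        ≤ ∫ x in (0:ℝ)..r, f x := by
      apply intervalIntegral.integral_mono_on hr0.le
      · exact (Continuous.intervalIntegrable (by fun_prop) 0 r)
      · exact hfc.intervalIntegrable 0 r
      · exact hle
    have hval : (∫ x in (0:ℝ)..r, (t + (1 - t) * χ r) * Real.cos x)
        = Real.sin r * (t + (1 - t) * χ r) := by
      rw [intervalIntegral.integral_const_mul, integral_cos]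
      simp [mul_comm]
    linarith [hval ▸ hint]
  · -- part (b)
    rw [hkey, hderiv]
    have hder : deriv f r = -t * Real.sin r
        + (1 - t) * (deriv χ r * Real.cos r - χ r * Real.sin r) := by
      have h1 : HasDerivAt χ (deriv χ r) r := (hχd r).hasDerivAt
      have h2 : HasDerivAt Real.cos (-Real.sin r) r := Real.hasDerivAt_cos r
      have h3 : HasDerivAt (fun x => t * Real.cos x + (1 - t) * (χ x * Real.cos x))
          (t * (-Real.sin r)
          + (1 - t) * (deriv χ r * Real.cos r + χ r * (-Real.sin r))) r :=
        (h2.const_mul t).add ((h1.mul h2).const_mul (1 - t))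
      have hfg : f = fun x => t * Real.cos x + (1 - t) * (χ x * Real.cos x) := by
        funext x; simp only [hf]; ring
      rw [hfg, h3.deriv]; ring
    rw [hder]
    -- deriv χ r ≤ 0
    have hχ' : deriv χ r ≤ 0 := by
      have h1 : HasDerivWithinAt χ (deriv χ r) (Set.Ioi r) r :=
        (hχd r).hasDerivAt.hasDerivWithinAt
      rw [hasDerivWithinAt_iff_tendsto_slope] at h1
      have hsub : Set.Ioi r ⊆ (Set.Ioi r \ {r}) := fun x hx =>
        ⟨hx, ne_of_gt hx⟩
      have h2 : Filter.Tendsto (slope χ r) (nhdsWithin r (Set.Ioi r))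
          (nhds (deriv χ r)) :=
        h1.mono_left (nhdsWithin_mono r hsub)
      refine le_of_tendsto h2 ?_
      filter_upwards [Ioo_mem_nhdsGT_of_mem ⟨le_refl r, hrπ⟩] with x hx
      have hxIcc : x ∈ Set.Icc (0:ℝ) (Real.pi/2) :=
        ⟨(hr0.trans hx.1).le, hx.2.le⟩
      have : χ x ≤ χ r := hχdec hrIcc hxIcc hx.1.le
      have hxr : 0 < x - r := by linarith [hx.1]
      rw [slope_def_field]
      exact div_nonpos_of_nonpos_of_nonneg (by linarith) hxr.le
    nlinarith [Real.sin_nonneg_of_nonneg_of_le_pi hr0.le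
      (by linarith [Real.pi_pos] : r ≤ Real.pi),
      mul_nonneg h1t (neg_nonneg.mpr hχ')]
end

section
/- Let χ : [0, π/2] → [0,1] be smooth and decreasing, t ∈ (0,1], and define φ(r) := ∫_0^r [t cos x + (1−t) χ(x) cos x] dx. Assume additionally that ∫_0^r (−χ'(x)) sin(x) dx ≤ t·sin(r) for all r ∈ [0, π/2], and χ(r) ≤ t for all r > t. Then φ(r) ≤ 3t·sin(r) for all r ∈ (t, π/2]. -/
/-- Collapsing estimate: with `χ : [0,π/2] → [0,1]` smooth decreasing, `t ∈ (0,1]`,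
`φ(r) = ∫_0^r (t cos x + (1−t) χ(x) cos x) dx`, assume
`∫_0^r (−χ'(x)) sin x dx ≤ t sin r` on `[0,π/2]` and `χ(r) ≤ t` for `r > t`.
Then `φ(r) ≤ 3t·sin r` for all `r ∈ (t, π/2]`. -/
theorem stmt7 (χ : ℝ → ℝ) (hχ : ContDiff ℝ (⊤ : ℕ∞) χ)
    (hχmem : ∀ x ∈ Set.Icc (0 : ℝ) (Real.pi / 2), χ x ∈ Set.Icc (0 : ℝ) 1)
    (hχdec : AntitoneOn χ (Set.Icc 0 (Real.pi / 2)))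
    (t : ℝ) (ht : t ∈ Set.Ioc (0 : ℝ) 1) (φ : ℝ → ℝ)
    (hφ : ∀ r, φ r = ∫ x in (0 : ℝ)..r, t * Real.cos x + (1 - t) * χ x * Real.cos x)
    (hint : ∀ r ∈ Set.Icc (0 : ℝ) (Real.pi / 2),
      (∫ x in (0 : ℝ)..r, -(deriv χ x) * Real.sin x) ≤ t * Real.sin r)
    (hsmall : ∀ r, t < r → r ≤ Real.pi / 2 → χ r ≤ t) :
    ∀ r, t < r → r ≤ Real.pi / 2 → φ r ≤ 3 * t * Real.sin r := by
  obtain ⟨ht0, ht1⟩ := ht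
  intro r htr hrpi
  have hr0 : 0 < r := ht0.trans htr
  have hsin : 0 ≤ Real.sin r :=
    Real.sin_nonneg_of_nonneg_of_le_pi hr0.le (by linarith [Real.pi_pos])
  have hdχ : Continuous (deriv χ) := hχ.continuous_deriv (by simp)
  have hu : ∀ x ∈ Set.uIcc (0 : ℝ) r,
      HasDerivAt (fun y => t + (1 - t) * χ y) ((1 - t) * deriv χ x) x := by
    intro x _
    exact (((hχ.differentiable (by simp) x).hasDerivAt.const_mul (1 - t)).const_add t)
  have hv : ∀ x ∈ Set.uIcc (0 : ℝ) r,
      HasDerivAt Real.sin (Real.cos x) x := fun x _ => Real.hasDerivAt_sin x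
  have hu' : IntervalIntegrable (fun x => (1 - t) * deriv χ x)
      MeasureTheory.volume 0 r := (continuous_const.mul hdχ).intervalIntegrable 0 r
  have hv' : IntervalIntegrable Real.cos MeasureTheory.volume 0 r :=
    Real.continuous_cos.intervalIntegrable 0 r
  have hibp := intervalIntegral.integral_mul_deriv_eq_deriv_mul hu hv hu' hv'
  -- rewrite φ r
  have hφr : φ r = (t + (1 - t) * χ r) * Real.sin r
      + (1 - t) * ∫ x in (0:ℝ)..r, -(deriv χ x) * Real.sin x := by
    rw [hφ r]
    have h1 : (∫ x in (0:ℝ)..r, t * Real.cos x + (1 - t) * χ x * Real.cos x)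
        = ∫ x in (0:ℝ)..r, (t + (1 - t) * χ x) * Real.cos x := by
      apply intervalIntegral.integral_congr
      intro x _
      ring
    rw [h1, hibp]
    have h2 : (∫ x in (0:ℝ)..r, (1 - t) * deriv χ x * Real.sin x)
        = -((1 - t) * ∫ x in (0:ℝ)..r, -(deriv χ x) * Real.sin x) := by
      rw [← intervalIntegral.integral_const_mul, ← intervalIntegral.integral_neg]
      apply intervalIntegral.integral_congr
      intro x _
      ring
    rw [h2]
    simp [Real.sin_zero]
    ring
  have hI := hint r ⟨hr0.le, hrpi⟩
  have hχr1 : χ r ≤ t := hsmall r htr hrpi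
  have hχr0 : 0 ≤ χ r := (hχmem r ⟨hr0.le, hrpi⟩).1
  rw [hφr]
  nlinarith [mul_nonneg hχr0 hsin, mul_nonneg ht0.le hsin,
    mul_le_mul_of_nonneg_left hI (by linarith : (0:ℝ) ≤ 1 - t)]
end

section
/- Let χ : [0, π/2] → [0,1] be smooth and decreasing with ∫_0^r (−χ'(x))·sin(x) dx ≤ min{t²/(1−t), t}·sin(r) for all r ∈ (0, π/2], where t ∈ (0,1). Define φ(r) := ∫_0^r [t cos x + (1−t) χ(x) cos x] dx. Then −φ''(r)/φ(r) ≥ tan(r)·φ'(r)/φ(r) ≥ 1 − t for all r ∈ (0, π/2). -/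
open Real intervalIntegral Set Filter Topology

lemma deriv_nonpos_of_antitoneOn_aux {χ : ℝ → ℝ} {d r b : ℝ}
    (hd : HasDerivAt χ d r) (hdec : AntitoneOn χ (Set.Icc 0 b))
    (hr : r ∈ Set.Ioo 0 b) : d ≤ 0 := by
  have hs : Tendsto (slope χ r) (𝓝[>] r) (𝓝 d) :=
    (hasDerivAt_iff_tendsto_slope.mp hd).mono_left
      (nhdsWithin_mono r (fun y hy => ne_of_gt hy : Set.Ioi r ⊆ {r}ᶜ))
  refine le_of_tendsto hs ?_
  filter_upwards [Ioo_mem_nhdsGT_of_mem ⟨le_refl r, hr.2⟩] with y hy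
  have h1 : χ y ≤ χ r := hdec ⟨hr.1.le, hr.2.le⟩ ⟨(hr.1.trans hy.1).le, hy.2.le⟩ hy.1.le
  have h2 : 0 < y - r := sub_pos.mpr hy.1
  rw [slope_def_field]
  exact div_nonpos_of_nonpos_of_nonneg (by linarith) h2.le

/-- With `χ : [0,π/2] → [0,1]` smooth decreasing satisfying
`∫_0^r (−χ'(x)) sin x dx ≤ min(t²/(1−t), t)·sin r` for `r ∈ (0,π/2]`, `t ∈ (0,1)`, and
`φ(r) = ∫_0^r (t cos x + (1−t) χ(x) cos x) dx`, one has
`−φ''(r)/φ(r) ≥ tan(r)·φ'(r)/φ(r) ≥ 1 − t` on `(0,π/2)`. -/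
theorem stmt8 (χ : ℝ → ℝ) (hχ : ContDiff ℝ (⊤ : ℕ∞) χ)
    (hχmem : ∀ x ∈ Set.Icc (0 : ℝ) (Real.pi / 2), χ x ∈ Set.Icc (0 : ℝ) 1)
    (hχdec : AntitoneOn χ (Set.Icc 0 (Real.pi / 2)))
    (t : ℝ) (ht : t ∈ Set.Ioo (0 : ℝ) 1)
    (hint : ∀ r ∈ Set.Ioc (0 : ℝ) (Real.pi / 2),
      (∫ x in (0 : ℝ)..r, -(deriv χ x) * Real.sin x) ≤
        min (t ^ 2 / (1 - t)) t * Real.sin r)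
    (φ : ℝ → ℝ)
    (hφ : ∀ r, φ r = ∫ x in (0 : ℝ)..r, t * Real.cos x + (1 - t) * χ x * Real.cos x) :
    ∀ r ∈ Set.Ioo (0 : ℝ) (Real.pi / 2),
      Real.tan r * deriv φ r / φ r ≤ -(deriv (deriv φ) r) / φ r ∧
      1 - t ≤ Real.tan r * deriv φ r / φ r := by
  obtain ⟨ht0, ht1⟩ := ht
  have hχc : Continuous χ := hχ.continuous
  have hχd : Differentiable ℝ χ := hχ.differentiable (by simp)
  have hχ'c : Continuous (deriv χ) := hχ.continuous_deriv (by simp)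
  set f : ℝ → ℝ := fun x => t * Real.cos x + (1 - t) * χ x * Real.cos x with hf
  have hfc : Continuous f := by continuity
  have hφfun : φ = fun u => ∫ x in (0:ℝ)..u, f x := funext hφ
  have hderivφ : deriv φ = f := by
    funext u
    rw [hφfun]
    exact Continuous.deriv_integral f hfc 0 u
  intro r hr
  obtain ⟨hr0, hr2⟩ := hr
  have hcos : 0 < Real.cos r := Real.cos_pos_of_mem_Ioo ⟨by linarith [Real.pi_pos], hr2⟩
  have hsin : 0 < Real.sin r := Real.sin_pos_of_pos_of_lt_pi hr0 (by linarith [Real.pi_pos])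
  -- φ r ≥ t * sin r > 0
  have hcosnn : ∀ x ∈ Set.Icc (0:ℝ) r, 0 ≤ Real.cos x := fun x hx =>
    Real.cos_nonneg_of_mem_Icc ⟨by linarith [hx.1, Real.pi_pos], by linarith [hx.2]⟩
  have hχnn : ∀ x ∈ Set.Icc (0:ℝ) r, 0 ≤ χ x := fun x hx =>
    (hχmem x ⟨hx.1, by linarith [hx.2]⟩).1
  have hφlb : t * Real.sin r ≤ φ r := by
    have h1 : (∫ x in (0:ℝ)..r, t * Real.cos x) ≤ ∫ x in (0:ℝ)..r, f x := by
      apply intervalIntegral.integral_mono_on hr0.le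
      · exact ((continuous_const.mul Real.continuous_cos).intervalIntegrable 0 r)
      · exact hfc.intervalIntegrable 0 r
      · intro x hx
        have := mul_nonneg (mul_nonneg (by linarith : (0:ℝ) ≤ 1 - t) (hχnn x hx)) (hcosnn x hx)
        simp only [hf]; linarith
    have h2 : (∫ x in (0:ℝ)..r, t * Real.cos x) = t * Real.sin r := by
      rw [intervalIntegral.integral_const_mul, integral_cos]; simp
    rw [hφ r]; rw [h2] at h1; exact h1
  have hφpos : 0 < φ r := lt_of_lt_of_le (mul_pos ht0 hsin) hφlb
  -- deriv φ r and second derivative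
  have hdφr : deriv φ r = Real.cos r * (t + (1 - t) * χ r) := by
    rw [hderivφ]; simp only [hf]; ring
  have hdf : HasDerivAt f
      (-(Real.sin r) * (t + (1 - t) * χ r) + (1 - t) * deriv χ r * Real.cos r) r := by
    have h1 : HasDerivAt (fun x => t * Real.cos x) (t * (-Real.sin r)) r :=
      (Real.hasDerivAt_cos r).const_mul t
    have h2 : HasDerivAt (fun x => (1 - t) * χ x * Real.cos x)
        (((1 - t) * deriv χ r) * Real.cos r + ((1 - t) * χ r) * (-Real.sin r)) r :=
      (((hχd r).hasDerivAt.const_mul (1 - t)).mul (Real.hasDerivAt_cos r))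
    have := h1.add h2
    exact this.congr_deriv (by ring)
  have hd2 : deriv (deriv φ) r =
      -(Real.sin r) * (t + (1 - t) * χ r) + (1 - t) * deriv χ r * Real.cos r := by
    rw [hderivφ]; exact hdf.deriv
  -- χ' r ≤ 0
  have hχ'le : deriv χ r ≤ 0 :=
    deriv_nonpos_of_antitoneOn_aux (hχd r).hasDerivAt hχdec ⟨hr0, hr2⟩
  -- tan r * deriv φ r = sin r * (t + (1-t) χ r)
  have htan : Real.tan r * deriv φ r = Real.sin r * (t + (1 - t) * χ r) := by
    rw [hdφr, Real.tan_eq_sin_div_cos]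
    field_simp
  -- integration by parts
  have hibp : (∫ x in (0:ℝ)..r, χ x * Real.cos x) =
      χ r * Real.sin r - χ 0 * Real.sin 0 - ∫ x in (0:ℝ)..r, deriv χ x * Real.sin x :=
    intervalIntegral.integral_mul_deriv_eq_deriv_mul
      (fun x _ => (hχd x).hasDerivAt) (fun x _ => Real.hasDerivAt_sin x)
      (hχ'c.intervalIntegrable 0 r) (Real.continuous_cos.intervalIntegrable 0 r)
  set I : ℝ := ∫ x in (0:ℝ)..r, -(deriv χ x) * Real.sin x with hI
  have hIneg : I = -∫ x in (0:ℝ)..r, deriv χ x * Real.sin x := by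
    rw [hI, ← intervalIntegral.integral_neg]
    congr 1; funext x; ring
  have hsplit : φ r = t * Real.sin r + (1 - t) * ∫ x in (0:ℝ)..r, χ x * Real.cos x := by
    rw [hφ r]
    have e1 : (∫ x in (0:ℝ)..r, t * Real.cos x + (1 - t) * χ x * Real.cos x) =
        (∫ x in (0:ℝ)..r, t * Real.cos x) +
          ∫ x in (0:ℝ)..r, (1 - t) * (χ x * Real.cos x) := by
      rw [← intervalIntegral.integral_add (f := fun x => t * Real.cos x)
        (g := fun x => (1 - t) * (χ x * Real.cos x))
        ((continuous_const.mul Real.continuous_cos).intervalIntegrable 0 r)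
        ((continuous_const.mul (hχc.mul Real.continuous_cos)).intervalIntegrable 0 r)]
      congr 1; funext x; ring
    rw [e1, intervalIntegral.integral_const_mul, intervalIntegral.integral_const_mul,
      integral_cos, Real.sin_zero, sub_zero]
  have hkey : φ r = Real.sin r * (t + (1 - t) * χ r) + (1 - t) * I := by
    rw [hsplit, hibp, hIneg, Real.sin_zero]
    ring
  constructor
  · -- first inequality
    have h : Real.tan r * deriv φ r ≤ -(deriv (deriv φ) r) := by
      rw [htan, hd2]
      nlinarith [mul_nonneg (mul_nonneg (by linarith : (0:ℝ) ≤ 1 - t)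
        (neg_nonneg.mpr hχ'le)) hcos.le]
    exact div_le_div_of_nonneg_right h hφpos.le
  · -- second inequality
    rw [le_div_iff₀ hφpos, htan]
    have hImin : I ≤ t ^ 2 / (1 - t) * Real.sin r :=
      (hint r ⟨hr0, hr2.le⟩).trans (mul_le_mul_of_nonneg_right (min_le_left _ _) hsin.le)
    have hIbound : (1 - t) * I ≤ t ^ 2 * Real.sin r := by
      have := mul_le_mul_of_nonneg_left hImin (by linarith : (0:ℝ) ≤ 1 - t)
      have h1t : (1:ℝ) - t ≠ 0 := by linarith
      have heq : (1 - t) * (t ^ 2 / (1 - t) * Real.sin r) = t ^ 2 * Real.sin r := by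
        field_simp
      linarith [heq ▸ this]
    have htφ : t ^ 2 * Real.sin r ≤ t * φ r := by
      have := mul_le_mul_of_nonneg_left hφlb ht0.le
      nlinarith
    nlinarith [hkey]
end

section
/- Let (M,g) be a complete Riemannian manifold with nonnegative sectional curvature and γ : [0,∞) → M a unit-speed geodesic ray. Then the Busemann function B_γ(x) := lim_{t→∞} (t − d(x, γ(t))) is well-defined (the limit exists for every x ∈ M), 1-Lipschitz, and convex along geodesics. -/
open Filter

/-- The Euclidean comparison angle at `p` of the triple `(p,a,b)`. -/
noncomputable def cmpAngle0 {Y : Type*} (d : Y → Y → ℝ) (p a b : Y) : ℝ :=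
  Real.arccos ((d p a ^ 2 + d p b ^ 2 - d a b ^ 2) / (2 * d p a * d p b))

/-- Nonnegative curvature via the (1+3)-point comparison condition. -/
def QuadCurvGE0 {Y : Type*} (d : Y → Y → ℝ) : Prop :=
  ∀ p a b c : Y, d p a ≠ 0 → d p b ≠ 0 → d p c ≠ 0 →
    cmpAngle0 d p a b + cmpAngle0 d p b c + cmpAngle0 d p c a ≤ 2 * Real.pi

/-!
Along the ray, `t - d(x, γ t)` is nondecreasing (triangle inequality) and bounded by
`d(x, γ 0)`, so it converges; a limit of `1`-Lipschitz functions is `1`-Lipschitz.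

For convexity, let `p` divide a segment `[x, y]` in the ratio `b : a` (`a + b = 1`). Nonnegative
curvature turns Stewart's identity into the inequality
`a d(x,q)² + b d(y,q)² ≤ d(p,q)² + a b d(x,y)²`, and with `S = a d(x,q) + b d(y,q)` this gives
`S - d(p,q) ≤ a b d(x,y)² / S`. Taking `q = γ t`, the right-hand side tends to `0`, and
`t - S = a (t - d(x,γ t)) + b (t - d(y,γ t))`, so `B p ≤ a B x + b B y` in the limit.
-/

open Topology

lemma add_nonneg_of_arccos_add_arccos_le_pi {u v : ℝ} (hu : -1 ≤ u) (hv : -1 ≤ v)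
    (h : Real.arccos u + Real.arccos v ≤ Real.pi) : 0 ≤ u + v := by
  by_contra! huv
  have := Real.arccos_lt_arccos hu (show u < -v by linarith) (by linarith)
  rw [Real.arccos_neg] at this
  linarith

lemma neg_one_le_sq_add_sq_sub_sq_div {a b c : ℝ} (ha : 0 < a) (hb : 0 < b) (hc : 0 ≤ c)
    (hcab : c ≤ a + b) : -1 ≤ (a ^ 2 + b ^ 2 - c ^ 2) / (2 * a * b) := by
  rw [le_div_iff₀ (by positivity)]
  nlinarith

lemma sub_le_div_of_sq_le_sq_add {S r k : ℝ} (hS : 0 < S) (hr : 0 ≤ r) (hk : 0 ≤ k)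
    (h : S ^ 2 ≤ r ^ 2 + k) : S - r ≤ k / S := by
  rw [le_div_iff₀ hS]
  rcases le_total S r with hSr | hrS
  · nlinarith
  · nlinarith

/-- Stewart's theorem, an identity in the Euclidean plane, becomes an inequality under
nonnegative curvature. -/
theorem QuadCurvGE0.stewart_le {M : Type*} [MetricSpace M]
    (hcurv : QuadCurvGE0 (fun x y : M => dist x y)) {x p y : M}
    (hxpy : dist x y = dist x p + dist p y) (q : M) :
    dist p y * dist x q ^ 2 + dist x p * dist y q ^ 2 ≤
      dist x y * (dist p q ^ 2 + dist x p * dist p y) := by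
  rcases eq_or_ne p x with rfl | hpx
  · simp
  rcases eq_or_ne p y with rfl | hpy
  · simp
  rcases eq_or_ne p q with rfl | hpq
  · rw [dist_self, hxpy, dist_comm y p]
    exact le_of_eq (by ring)
  have hα : 0 < dist p x := dist_pos.2 hpx
  have hβ : 0 < dist p y := dist_pos.2 hpy
  have hr : 0 < dist p q := dist_pos.2 hpq
  rw [dist_comm x p] at hxpy ⊢
  have hstraight :
      (dist p y ^ 2 + dist p x ^ 2 - dist y x ^ 2) / (2 * dist p y * dist p x) = -1 := by
    rw [dist_comm y x, hxpy]; field_simp; ring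
  have hangles := hcurv p x q y hα.ne' hr.ne' hβ.ne'
  simp only [cmpAngle0, hstraight, Real.arccos_neg_one] at hangles
  have hcos := add_nonneg_of_arccos_add_arccos_le_pi
    (neg_one_le_sq_add_sq_sub_sq_div hα hr (c := dist x q) dist_nonneg
      (by linarith [dist_triangle x p q, dist_comm x p]))
    (neg_one_le_sq_add_sq_sub_sq_div hr hβ (c := dist q y) dist_nonneg
      (by linarith [dist_triangle q p y, dist_comm q p]))
    (by linarith)
  rw [div_add_div _ _ (by positivity) (by positivity), le_div_iff₀ (by positivity)] at hcos
  rw [hxpy, dist_comm y q]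
  nlinarith [mul_pos (mul_pos hα hβ) hr]

section LimitsAlongRays

variable {M : Type*} [PseudoMetricSpace M] {f : ℝ → M} {x y p : M} {bx by' bp : ℝ}

lemma le_add_dist_of_tendsto (hx : Tendsto (fun t => t - dist x (f t)) atTop (𝓝 bx))
    (hy : Tendsto (fun t => t - dist y (f t)) atTop (𝓝 by')) : bx ≤ by' + dist x y :=
  le_of_tendsto_of_tendsto' hx (hy.add_const _) fun t => by
    linarith [dist_triangle y x (f t), dist_comm x y]

lemma le_of_tendsto_of_sq_dist_le (hx : Tendsto (fun t => t - dist x (f t)) atTop (𝓝 bx))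
    (hy : Tendsto (fun t => t - dist y (f t)) atTop (𝓝 by'))
    (hp : Tendsto (fun t => t - dist p (f t)) atTop (𝓝 bp)) {a b k : ℝ} (ha : 0 ≤ a)
    (hb : 0 ≤ b) (hab : a + b = 1) (hk : 0 ≤ k)
    (hq : ∀ t, a * dist x (f t) ^ 2 + b * dist y (f t) ^ 2 ≤ dist p (f t) ^ 2 + k) :
    bp ≤ a * bx + b * by' := by
  have hcomb := (hx.const_mul a).add (hy.const_mul b)
  set S := fun t => a * dist x (f t) + b * dist y (f t)
  have hS : ∀ t, S t = t - (a * (t - dist x (f t)) + b * (t - dist y (f t))) := fun t => by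
    linear_combination t * hab
  have hStop : Tendsto S atTop atTop := by
    refine (tendsto_id.atTop_add hcomb.neg).congr fun t => ?_
    rw [hS t, id]; ring
  have hbound : ∀ᶠ t in atTop, t - dist p (f t) ≤
      a * (t - dist x (f t)) + b * (t - dist y (f t)) + k / S t := by
    filter_upwards [hStop.eventually_gt_atTop 0] with t hSpos
    have hjensen : S t ^ 2 ≤ a * dist x (f t) ^ 2 + b * dist y (f t) ^ 2 := by
      have hb' : b = 1 - a := by linarith
      subst hb'
      nlinarith [mul_nonneg (mul_nonneg ha hb) (sq_nonneg (dist x (f t) - dist y (f t)))]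
    linarith [hS t, sub_le_div_of_sq_le_sq_add hSpos dist_nonneg hk (hjensen.trans (hq t))]
  refine le_of_tendsto_of_tendsto hp ?_ hbound
  simpa using hcomb.add (tendsto_const_nhds.div_atTop hStop)

end LimitsAlongRays

noncomputable def busemann {M : Type*} [PseudoMetricSpace M] (γ : ℝ → M) (x : M) : ℝ :=
  ⨆ t : Set.Ici (0 : ℝ), ((t : ℝ) - dist x (γ t))

section Busemann

variable {M : Type*} [PseudoMetricSpace M] {γ : ℝ → M}

lemma sub_dist_ray_le (hγ : ∀ s u : ℝ, 0 ≤ s → 0 ≤ u → dist (γ s) (γ u) = |s - u|)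
    (x : M) {t : ℝ} (ht : 0 ≤ t) : t - dist x (γ t) ≤ dist x (γ 0) := by
  have h := dist_triangle (γ 0) x (γ t)
  rw [hγ 0 t le_rfl ht, zero_sub, abs_neg, abs_of_nonneg ht, dist_comm] at h
  linarith

lemma monotoneOn_sub_dist_ray (hγ : ∀ s u : ℝ, 0 ≤ s → 0 ≤ u → dist (γ s) (γ u) = |s - u|)
    (x : M) : MonotoneOn (fun t => t - dist x (γ t)) (Set.Ici 0) := by
  intro t (ht : 0 ≤ t) u (hu : 0 ≤ u) htu
  have h := dist_triangle x (γ t) (γ u)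
  rw [hγ t u ht hu, abs_of_nonpos (by linarith)] at h
  dsimp only
  linarith

lemma tendsto_busemann (hγ : ∀ s u : ℝ, 0 ≤ s → 0 ≤ u → dist (γ s) (γ u) = |s - u|) (x : M) :
    Tendsto (fun t => t - dist x (γ t)) atTop (𝓝 (busemann γ x)) := by
  rw [← tendsto_comp_val_Ici_atTop (a := 0)]
  refine tendsto_atTop_ciSup (Set.monotoneOn_iff_monotone.1 (monotoneOn_sub_dist_ray hγ x))
    ⟨dist x (γ 0), ?_⟩
  rintro _ ⟨t, rfl⟩
  exact sub_dist_ray_le hγ x t.2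

lemma lipschitzWith_busemann (hγ : ∀ s u : ℝ, 0 ≤ s → 0 ≤ u → dist (γ s) (γ u) = |s - u|) :
    LipschitzWith 1 (busemann γ) :=
  .of_le_add fun x y => le_add_dist_of_tendsto (tendsto_busemann hγ x) (tendsto_busemann hγ y)

end Busemann

theorem convexOn_busemann_comp {M : Type*} [MetricSpace M]
    (hcurv : QuadCurvGE0 (fun x y : M => dist x y)) {γ : ℝ → M}
    (hγ : ∀ s u : ℝ, 0 ≤ s → 0 ≤ u → dist (γ s) (γ u) = |s - u|) {c : ℝ → M} {a b : ℝ}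
    (hc : ∀ s ∈ Set.Icc a b, ∀ u ∈ Set.Icc a b, dist (c s) (c u) = |s - u|) :
    ConvexOn ℝ (Set.Icc a b) (fun s => busemann γ (c s)) := by
  refine convexOn_iff_pairwise_pos.2 ⟨convex_Icc a b, fun s hs u hu hsu wa wb ha hb hab => ?_⟩
  have hm := convex_Icc a b hs hu ha.le hb.le hab
  simp only [smul_eq_mul] at hm ⊢
  have hL : 0 < |s - u| := abs_pos.2 (sub_ne_zero.2 hsu)
  have hxy := hc s hs u hu
  have hxp : dist (c s) (c (wa * s + wb * u)) = wb * |s - u| := by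
    rw [hc s hs _ hm, show s - (wa * s + wb * u) = wb * (s - u) by linear_combination -s * hab,
      abs_mul, abs_of_pos hb]
  have hpy : dist (c (wa * s + wb * u)) (c u) = wa * |s - u| := by
    rw [hc _ hm u hu, show wa * s + wb * u - u = wa * (s - u) by linear_combination u * hab,
      abs_mul, abs_of_pos ha]
  refine le_of_tendsto_of_sq_dist_le (tendsto_busemann hγ _) (tendsto_busemann hγ _)
    (tendsto_busemann hγ _) ha.le hb.le hab (k := wa * wb * |s - u| ^ 2) (by positivity)
    fun t => le_of_mul_le_mul_left ?_ hL
  have hstewart := hcurv.stewart_le (x := c s) (p := c (wa * s + wb * u)) (y := c u)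
    (by rw [hxy, hxp, hpy]; linear_combination |s - u| * hab.symm) (γ t)
  rw [hxy, hxp, hpy] at hstewart
  linear_combination hstewart

theorem stmt13_general {M : Type*} [MetricSpace M]
    (hcurv : QuadCurvGE0 (fun x y : M => dist x y))
    (γ : ℝ → M) (hγ : ∀ s u : ℝ, 0 ≤ s → 0 ≤ u → dist (γ s) (γ u) = |s - u|) :
    ∃ B : M → ℝ,
      (∀ x : M, Tendsto (fun t => t - dist x (γ t)) atTop (nhds (B x))) ∧
      LipschitzWith 1 B ∧
      ∀ (c : ℝ → M) (a b : ℝ),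
        (∀ s ∈ Set.Icc a b, ∀ u ∈ Set.Icc a b, dist (c s) (c u) = |s - u|) →
        ConvexOn ℝ (Set.Icc a b) (fun s => B (c s)) :=
  ⟨busemann γ, tendsto_busemann hγ, lipschitzWith_busemann hγ,
    fun _ _ _ hc => convexOn_busemann_comp hcurv hγ hc⟩

/-- On a complete geodesic space of nonnegative curvature (abstracting a complete
Riemannian manifold with `sec ≥ 0`), for any unit-speed geodesic ray `γ` the Busemann
function `B_γ(x) = lim_{t→∞} (t − d(x,γ(t)))` is well-defined, 1-Lipschitz, and convex
along geodesics. -/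
theorem stmt13 {M : Type*} [MetricSpace M] [CompleteSpace M]
    (hmid : ∀ x y : M, ∃ m : M, dist x m = dist x y / 2 ∧ dist m y = dist x y / 2)
    (hcurv : QuadCurvGE0 (fun x y : M => dist x y))
    (γ : ℝ → M) (hγ : ∀ s u : ℝ, 0 ≤ s → 0 ≤ u → dist (γ s) (γ u) = |s - u|) :
    ∃ B : M → ℝ,
      (∀ x : M, Tendsto (fun t => t - dist x (γ t)) atTop (nhds (B x))) ∧
      LipschitzWith 1 B ∧
      ∀ (c : ℝ → M) (a b : ℝ),
        (∀ s ∈ Set.Icc a b, ∀ u ∈ Set.Icc a b, dist (c s) (c u) = |s - u|) →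
        ConvexOn ℝ (Set.Icc a b) (fun s => B (c s)) :=
  stmt13_general hcurv γ hγ
end
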